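/- Let M be a monoid. The trivial M-act {0} is finitely presented if and only if there exists a finitely presented M-act A containing a zero element (an element 0 ∈ A with 0m = 0 for all m ∈ M). -/

import Mathlib

/-- A right act of a monoid `M` on a type `A`. -/
structure RActOn (M : Type*) [Monoid M] (A : Type*) where
  act : A → M → A
  act_one : ∀ a, act a 1 = a
  act_mul : ∀ a m n, act a (m * n) = act (act a m) n

namespace RActOn

variable {M : Type*} [Monoid M]

/-- `f` is a homomorphism of `M`-acts. -/
def IsHom {A B : Type*} (α : RActOn M A) (β : RActOn M B) (f : A → B) : Prop :=
  ∀ a m, f (α.act a m) = β.act (f a) m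

/-- The two acts are isomorphic. -/
def Isomorphic {A B : Type*} (α : RActOn M A) (β : RActOn M B) : Prop :=
  ∃ f : A → B, IsHom α β f ∧ Function.Bijective f

/-- `ρ` is an `M`-act congruence on `A`. -/
def IsCong {A : Type*} (α : RActOn M A) (ρ : A → A → Prop) : Prop :=
  Equivalence ρ ∧ ∀ a b m, ρ a b → ρ (α.act a m) (α.act b m)

/-- The smallest congruence containing the relation `X`. -/
def congClosure {A : Type*} (α : RActOn M A) (X : A → A → Prop) : A → A → Prop :=
  fun a b => ∀ ρ : A → A → Prop, IsCong α ρ → (∀ x y, X x y → ρ x y) → ρ a b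

/-- The free `M`-act on a set `X`: carrier `X × M`, action `(x, m) · n = (x, m * n)`. -/
def free (M : Type*) [Monoid M] (X : Type*) : RActOn M (X × M) where
  act p n := (p.1, p.2 * n)
  act_one := by intro a; simp
  act_mul := by intro a m n; simp [mul_assoc]

/-- The `M`-act `α` is defined by the presentation `⟨X | R⟩`. -/
def DefinedBy {A : Type*} (α : RActOn M A) (X : Type*)
    (R : Set ((X × M) × (X × M))) : Prop :=
  ∃ f : X × M → A, Function.Surjective f ∧ IsHom (free M X) α f ∧
    ∀ u v : X × M, f u = f v ↔ congClosure (free M X) (fun a b => (a, b) ∈ R) u v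

/-- The `M`-act `α` is finitely presented. -/
def FinitelyPresented {A : Type*} (α : RActOn M A) : Prop :=
  ∃ (X : Type) (_ : Finite X) (R : Set ((X × M) × (X × M))),
    R.Finite ∧ DefinedBy α X R

/-- The `M`-act `α` is finitely generated. -/
def FinitelyGenerated {A : Type*} (α : RActOn M A) : Prop :=
  ∃ U : Set A, U.Finite ∧ ∀ a : A, ∃ u ∈ U, ∃ m : M, α.act u m = a

/-- `B` is a subact of `A`. -/
def IsSubact {A : Type*} (α : RActOn M A) (B : Set A) : Prop :=
  ∀ b ∈ B, ∀ m : M, α.act b m ∈ B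

/-- The subset `S` is generated, as a subact, by `U ⊆ S`. -/
def FGSet {A : Type*} (α : RActOn M A) (S : Set A) : Prop :=
  ∃ U ⊆ S, U.Finite ∧ ∀ a ∈ S, ∃ u ∈ U, ∃ m : M, α.act u m = a

/-- The act induced on a subact. -/
def subAct {A : Type*} (α : RActOn M A) (B : Set A) (hB : IsSubact α B) :
    RActOn M B where
  act b m := ⟨α.act b m, hB b b.2 m⟩
  act_one := by intro a; ext; simp [α.act_one]
  act_mul := by intro a m n; ext; simp [α.act_mul]

/-- The Rees congruence relation determined by `B`. -/
def reesRel {A : Type*} (B : Set A) : A → A → Prop :=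
  fun a b => a = b ∨ (a ∈ B ∧ b ∈ B)

/-- The Rees quotient act `A / B`. -/
def reesAct {A : Type*} (α : RActOn M A) (B : Set A) (hB : IsSubact α B) :
    RActOn M (Quot (reesRel B)) where
  act q m := Quot.lift (fun a => Quot.mk _ (α.act a m))
    (by
      intro a b h
      apply Quot.sound
      rcases h with h | ⟨ha, hb⟩
      · exact Or.inl (by rw [h])
      · exact Or.inr ⟨hB a ha m, hB b hb m⟩) q
  act_one := by
    intro q
    induction q using Quot.ind with
    | _ a => simp [α.act_one]
  act_mul := by
    intro q m n
    induction q using Quot.ind with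
    | _ a => simp [α.act_mul]

/-- The trivial one-element `M`-act. -/
def trivAct (M : Type*) [Monoid M] : RActOn M PUnit where
  act _ _ := PUnit.unit
  act_one := by intro a; rfl
  act_mul := by intro a m n; rfl

/-- The disjoint union of two `M`-acts. -/
def sumAct {A B : Type*} (α : RActOn M A) (β : RActOn M B) : RActOn M (A ⊕ B) where
  act x m := Sum.elim (fun a => Sum.inl (α.act a m)) (fun b => Sum.inr (β.act b m)) x
  act_one := by intro x; cases x <;> simp [α.act_one, β.act_one]
  act_mul := by intro x m n; cases x <;> simp [α.act_mul, β.act_mul]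

/-- The `M`-act `M` itself, by right multiplication. -/
def selfAct (M : Type*) [Monoid M] : RActOn M M where
  act a m := a * m
  act_one := by intro a; simp
  act_mul := by intro a m n; simp [mul_assoc]

end RActOn

namespace RActOn

variable {M : Type*} [Monoid M]

section congClosure

variable {A : Type*} {α : RActOn M A} {X Y : A → A → Prop}

theorem isCong_congClosure : IsCong α (congClosure α X) :=
  ⟨⟨fun _ _ hρ _ => hρ.1.refl _,
    fun h ρ hρ hX => hρ.1.symm (h ρ hρ hX),
    fun h₁ h₂ ρ hρ hX => hρ.1.trans (h₁ ρ hρ hX) (h₂ ρ hρ hX)⟩,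
   fun _ _ m h ρ hρ hX => hρ.2 _ _ m (h ρ hρ hX)⟩

theorem congClosure_of_rel {a b : A} (h : X a b) : congClosure α X a b :=
  fun _ _ hX => hX a b h

theorem congClosure_mono (hXY : ∀ a b, X a b → Y a b) {a b : A}
    (h : congClosure α X a b) : congClosure α Y a b :=
  fun ρ hρ hY => h ρ hρ fun x y hxy => hY x y (hXY x y hxy)

end congClosure

theorem definedBy_trivAct_iff {X : Type*} {R : Set ((X × M) × (X × M))} :
    DefinedBy (trivAct M : RActOn M PUnit.{w + 1}) X R ↔
      Nonempty X ∧ ∀ u v, congClosure (free M X) (fun a b => (a, b) ∈ R) u v := by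
  constructor
  · rintro ⟨f, hf, -, hker⟩
    obtain ⟨⟨x, -⟩, -⟩ := hf PUnit.unit
    exact ⟨⟨x⟩, fun u v => (hker u v).1 rfl⟩
  · rintro ⟨⟨x⟩, htotal⟩
    exact ⟨fun _ => PUnit.unit, fun _ => ⟨(x, 1), rfl⟩, fun _ _ => rfl,
      fun u v => iff_of_true rfl (htotal u v)⟩

theorem finitelyPresented_trivAct_iff :
    FinitelyPresented (trivAct M : RActOn M PUnit.{w + 1}) ↔
      ∃ (X : Type) (_ : Finite X) (R : Set ((X × M) × (X × M))), R.Finite ∧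
        Nonempty X ∧ ∀ u v, congClosure (free M X) (fun a b => (a, b) ∈ R) u v := by
  simp only [FinitelyPresented, definedBy_trivAct_iff]

theorem finitelyPresented_trivAct_changeUniv
    (h : FinitelyPresented (trivAct M : RActOn M PUnit.{v + 1})) :
    FinitelyPresented (trivAct M : RActOn M PUnit.{w + 1}) :=
  finitelyPresented_trivAct_iff.2 (finitelyPresented_trivAct_iff.1 h)

/-- If the generator `p` of a presentation `⟨X | R⟩` represents a zero, then adding the relations
`x = p` for the generators `x` collapses the act: every `x m` becomes `p m`, which `R` already identifies with `p`. -/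
theorem congClosure_union_range_total_of_zero {A X : Type*} {α : RActOn M A}
    {R : Set ((X × M) × (X × M))} {f : X × M → A} (hf : IsHom (free M X) α f)
    (hker : ∀ u v, f u = f v → congClosure (free M X) (fun a b => (a, b) ∈ R) u v)
    {z : A} (hz : ∀ m, α.act z m = z) {p : X × M} (hp : f p = z) (u v : X × M) :
    congClosure (free M X) (fun a b => (a, b) ∈ R ∪ Set.range fun x => ((x, 1), p)) u v := by
  set C := congClosure (free M X) fun a b => (a, b) ∈ R ∪ Set.range fun x => ((x, 1), p)
  have hC : IsCong (free M X) C := isCong_congClosure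
  have to_p : ∀ q, C q p := by
    rintro ⟨x, m⟩
    have hx : C (x, 1) p := congClosure_of_rel (Or.inr ⟨x, rfl⟩)
    have hxm : C (x, m) (p.1, p.2 * m) := by simpa [free] using hC.2 _ _ m hx
    have hpm : f (p.1, p.2 * m) = f p := (hf p m).trans (by rw [hp, hz])
    exact hC.1.trans hxm <| congClosure_mono (fun _ _ h => Or.inl h) (hker _ _ hpm)
  exact hC.1.trans (to_p u) (hC.1.symm (to_p v))

theorem FinitelyPresented.finitelyPresented_trivAct {A : Type*} {α : RActOn M A}
    (hα : FinitelyPresented α) {z : A} (hz : ∀ m, α.act z m = z) :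
    FinitelyPresented (trivAct M : RActOn M PUnit.{w + 1}) := by
  obtain ⟨X, hX, R, hR, f, hf, hhom, hker⟩ := hα
  obtain ⟨p, hp⟩ := hf z
  exact finitelyPresented_trivAct_iff.2 ⟨X, hX, _, hR.union (Set.finite_range _), ⟨p.1⟩,
    congClosure_union_range_total_of_zero hhom (fun u v => (hker u v).1) hz hp⟩

end RActOn

open RActOn in
/-- The trivial `M`-act is finitely presented iff there exists a finitely
presented `M`-act containing a zero element. -/
theorem trivial_fp_iff_exists_fp_with_zero {M : Type*} [Monoid M] :
    FinitelyPresented (trivAct M) ↔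
      ∃ (A : Type u) (α : RActOn M A) (z : A),
        (∀ m : M, α.act z m = z) ∧ FinitelyPresented α := by
  constructor
  · intro h
    exact ⟨PUnit, trivAct M, PUnit.unit, fun _ => rfl, finitelyPresented_trivAct_changeUniv h⟩
  · rintro ⟨A, α, z, hz, hα⟩
    exact hα.finitelyPresented_trivAct hz
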